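/- arXiv:2012.00628 — 5 statements merged into one kernel-verified Lean document; each statement's English description precedes it below -/
import Mathlib

section
/- Let (x_t) be generated by the SUM iteration (with arbitrary vectors g_t in ℝ^d, any β ∈ (0,1), s ≥ 0, and nonnegative stepsizes γ_t). Define p_0 = 0, p_t = (β/(1−β))(x_t − x_{t−1} + s γ_{t−1} g_{t−1}) for t ≥ 1, v_t = ((1−β)/β) p_t, and z_t = x_t + p_t. Then for every t ≥ 0: z_{t+1} = z_t − (γ_t/(1−β)) g_t, and v_{t+1} = β v_t + ((1−β)s − 1) γ_t g_t. -/
open Filter Topology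

/-- **Lemma 1.** The auxiliary sequences `z_t = x_t + p_t` and `v_t = ((1-β)/β) p_t`
attached to the SUM iteration satisfy the recursions
`z_{t+1} = z_t - (γ_t/(1-β)) g_t` and `v_{t+1} = β v_t + ((1-β)s - 1) γ_t g_t`. -/
theorem sum_method_auxiliary_recursion
    {d : ℕ}
    (β s : ℝ) (hβ0 : 0 < β) (hβ1 : β < 1) (hs : 0 ≤ s)
    (γ : ℕ → ℝ) (hγ : ∀ t, 0 ≤ γ t)
    (g : ℕ → EuclideanSpace ℝ (Fin d))
    (x₀ : EuclideanSpace ℝ (Fin d))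
    (x y ys : ℕ → EuclideanSpace ℝ (Fin d))
    (hx0 : x 0 = x₀) (hys0 : ys 0 = x₀)
    (hy : ∀ t, y (t + 1) = x t - γ t • g t)
    (hys : ∀ t, ys (t + 1) = x t - (s * γ t) • g t)
    (hx : ∀ t, x (t + 1) = y (t + 1) + β • (ys (t + 1) - ys t))
    (p v z : ℕ → EuclideanSpace ℝ (Fin d))
    (hp0 : p 0 = 0)
    (hp : ∀ t, p (t + 1) = (β / (1 - β)) • (x (t + 1) - x t + (s * γ t) • g t))
    (hv : ∀ t, v t = ((1 - β) / β) • p t)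
    (hz : ∀ t, z t = x t + p t) :
    ∀ t, z (t + 1) = z t - (γ t / (1 - β)) • g t ∧
      v (t + 1) = β • v t + (((1 - β) * s - 1) * γ t) • g t := by
  have hb : (1 : ℝ) - β ≠ 0 := by linarith
  have hβne : β ≠ 0 := ne_of_gt hβ0
  have hkey : ∀ n, β • (x n - ys n) = (1 - β) • p n := by
    intro n
    cases n with
    | zero => simp [hx0, hys0, hp0]
    | succ m =>
      rw [hys m, hp m, smul_smul]
      have h1 : (1 - β) * (β / (1 - β)) = β := by field_simp
      rw [h1]
      module
  intro t
  have hys_t : ys t = x t - ((1 - β) / β) • p t := by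
    apply smul_right_injective (EuclideanSpace ℝ (Fin d)) hβne
    have h := hkey t
    rw [smul_sub] at h
    show β • ys t = β • (x t - ((1 - β) / β) • p t)
    rw [smul_sub, smul_smul]
    have h2 : β * ((1 - β) / β) = 1 - β := by field_simp
    rw [h2]
    have : β • ys t = β • x t - (1 - β) • p t := by
      rw [← h]; abel
    rw [this]
  have hxt1 : x (t + 1) = x t - γ t • g t
      + β • ((x t - (s * γ t) • g t) - (x t - ((1 - β) / β) • p t)) := by
    rw [hx t, hy t, hys t, hys_t]
  have hpt1 : p (t + 1) = (β / (1 - β)) • (x (t + 1) - x t + (s * γ t) • g t) := hp t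
  rw [hxt1] at hpt1
  constructor
  · rw [hz (t + 1), hz t, hpt1, hxt1]
    match_scalars <;> field_simp <;> ring
  · rw [hv (t + 1), hv t, hpt1]
    match_scalars <;> field_simp <;> ring
end

section
/- In the SUM method with β ∈ (0,1), define p_0 = 0, p_t = (β/(1−β))(x_t − x_{t−1} + s γ_{t−1} g_{t−1}) for t ≥ 1, and z_t = x_t + p_t. If ∇f is α-Hölder continuous with constant A, then for every t ≥ 1: ‖∇f(z_t) − ∇f(x_t)‖² ≤ (A² β^{2α} |(1−β)s − 1|^{2α} / (1−β)^{3α}) · Σ_{i=0}^{t−1} β^{iα} γ_{t−1−i}^{2α} ‖g_{t−1−i}‖^{2α}. -/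
open Finset

/-!
Write `c = (1 - β) s - 1` and `m_t = x_{t+1} - x_t + s γ_t g_t`, so that `p_{t+1} = β/(1-β) m_t`.
The SUM update gives the first-order recurrence `m_{t+1} = β m_t + c γ_{t+1} g_{t+1}` with
`m_0 = c γ_0 g_0`, hence `‖m_t‖ ≤ |c| ∑_i β^i γ_{t-i} ‖g_{t-i}‖`. Hölder continuity turns
`‖∇f(z_t) - ∇f(x_t)‖²` into `A² ‖p_t‖^{2α}`; the weighted Cauchy–Schwarz inequality with weights
`β^i` (whose total is at most `1/(1-β)`) and the subadditivity of `u ↦ u^α` on `[0, ∞)` then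
distribute the power `2α` over the sum.
-/

theorem Real.rpow_sum_le_sum_rpow {ι : Type*} (s : Finset ι) {f : ι → ℝ}
    (hf : ∀ i ∈ s, 0 ≤ f i) {p : ℝ} (hp0 : 0 < p) (hp1 : p ≤ 1) :
    (∑ i ∈ s, f i) ^ p ≤ ∑ i ∈ s, f i ^ p :=
  Finset.le_sum_of_subadditive_on_pred (· ^ p) (0 ≤ ·) (Real.zero_rpow hp0.ne').le
    (fun _ _ ha hb => Real.rpow_add_le_add_rpow ha hb hp0.le hp1)
    (fun _ _ => add_nonneg) f hf

theorem sq_sum_pow_mul_le {K : Type*} [Field K] [LinearOrder K] [IsStrictOrderedRing K]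
    {β : K} (hβ0 : 0 ≤ β) (hβ1 : β < 1) (a : ℕ → K) (n : ℕ) :
    (∑ i ∈ range n, β ^ i * a i) ^ 2 ≤ (∑ i ∈ range n, β ^ i * a i ^ 2) / (1 - β) := by
  have hgeom : ∑ i ∈ range n, β ^ i ≤ 1 / (1 - β) := by
    have h := geom_sum_Ico_le_of_lt_one (m := 0) (n := n) hβ0 hβ1
    rwa [← range_eq_Ico, pow_zero] at h
  calc (∑ i ∈ range n, β ^ i * a i) ^ 2
      ≤ (∑ i ∈ range n, β ^ i) * ∑ i ∈ range n, β ^ i * a i ^ 2 :=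
        sum_sq_le_sum_mul_sum_of_sq_le_mul _ (fun i _ => pow_nonneg hβ0 i)
          (fun i _ => mul_nonneg (pow_nonneg hβ0 i) (sq_nonneg _)) (fun i _ => le_of_eq (by ring))
    _ ≤ 1 / (1 - β) * ∑ i ∈ range n, β ^ i * a i ^ 2 :=
        mul_le_mul_of_nonneg_right hgeom
          (sum_nonneg fun i _ => mul_nonneg (pow_nonneg hβ0 i) (sq_nonneg _))
    _ = _ := one_div_mul_eq_div _ _

theorem sum_pow_mul_rpow_two_mul_le {β : ℝ} (hβ0 : 0 ≤ β) (hβ1 : β < 1) {a : ℕ → ℝ}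
    (ha : ∀ i, 0 ≤ a i) {α : ℝ} (hα0 : 0 < α) (hα1 : α ≤ 1) (n : ℕ) :
    (∑ i ∈ range n, β ^ i * a i) ^ (2 * α) ≤
      (∑ i ∈ range n, β ^ ((i : ℝ) * α) * a i ^ (2 * α)) / (1 - β) ^ α := by
  have hS : 0 ≤ ∑ i ∈ range n, β ^ i * a i :=
    sum_nonneg fun i _ => mul_nonneg (pow_nonneg hβ0 i) (ha i)
  have hT : 0 ≤ ∑ i ∈ range n, β ^ i * a i ^ 2 :=
    sum_nonneg fun i _ => mul_nonneg (pow_nonneg hβ0 i) (sq_nonneg _)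
  calc (∑ i ∈ range n, β ^ i * a i) ^ (2 * α)
      = ((∑ i ∈ range n, β ^ i * a i) ^ 2) ^ α := by
        rw [Real.rpow_mul hS, Real.rpow_two]
    _ ≤ ((∑ i ∈ range n, β ^ i * a i ^ 2) / (1 - β)) ^ α :=
        Real.rpow_le_rpow (sq_nonneg _) (sq_sum_pow_mul_le hβ0 hβ1 a n) hα0.le
    _ = (∑ i ∈ range n, β ^ i * a i ^ 2) ^ α / (1 - β) ^ α :=
        Real.div_rpow hT (sub_nonneg.2 hβ1.le) α
    _ ≤ (∑ i ∈ range n, (β ^ i * a i ^ 2) ^ α) / (1 - β) ^ α := by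
        gcongr
        exact Real.rpow_sum_le_sum_rpow _
          (fun i _ => mul_nonneg (pow_nonneg hβ0 i) (sq_nonneg _)) hα0 hα1
    _ = _ := by
        congr 1
        refine sum_congr rfl fun i _ => ?_
        rw [Real.mul_rpow (pow_nonneg hβ0 i) (sq_nonneg _), ← Real.rpow_natCast,
          ← Real.rpow_mul hβ0, ← Real.rpow_two, ← Real.rpow_mul (ha i)]

theorem eq_sum_pow_smul_of_eq_smul_add {R E : Type*} [CommSemiring R] [AddCommMonoid E]
    [Module R E] {β : R} {m w : ℕ → E} (h0 : m 0 = w 0)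
    (hsucc : ∀ n, m (n + 1) = β • m n + w (n + 1)) (n : ℕ) :
    m n = ∑ i ∈ range (n + 1), β ^ i • w (n - i) := by
  induction n with
  | zero => simp [h0]
  | succ n ih =>
    rw [hsucc, ih, sum_range_succ' _ (n + 1), smul_sum]
    simp only [pow_succ', mul_smul, Nat.succ_sub_succ, pow_zero, one_smul, Nat.sub_zero]

theorem sum_method_momentum_eq {R E : Type*} [CommRing R] [AddCommGroup E] [Module R E]
    {β s : R} {γ : ℕ → R} {g : ℕ → E} {x₀ : E} {x y ys : ℕ → E}
    (hx0 : x 0 = x₀) (hys0 : ys 0 = x₀)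
    (hy : ∀ t, y (t + 1) = x t - γ t • g t)
    (hys : ∀ t, ys (t + 1) = x t - (s * γ t) • g t)
    (hx : ∀ t, x (t + 1) = y (t + 1) + β • (ys (t + 1) - ys t)) (n : ℕ) :
    x (n + 1) - x n + (s * γ n) • g n =
      ∑ i ∈ range (n + 1), β ^ i • (((1 - β) * s - 1) * γ (n - i)) • g (n - i) := by
  refine eq_sum_pow_smul_of_eq_smul_add (β := β)
    (w := fun k => (((1 - β) * s - 1) * γ k) • g k)
    (m := fun n => x (n + 1) - x n + (s * γ n) • g n) ?_ (fun t => ?_) n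
  · simp only [hx, hy, hys, hys0, hx0]
    module
  · simp only [hx (t + 1), hy, hys]
    module

theorem sum_method_norm_momentum_le {E : Type*} [NormedAddCommGroup E] [NormedSpace ℝ E]
    {β s : ℝ} (hβ0 : 0 ≤ β) {γ : ℕ → ℝ} (hγ : ∀ t, 0 ≤ γ t) {g : ℕ → E} {x₀ : E}
    {x y ys : ℕ → E} (hx0 : x 0 = x₀) (hys0 : ys 0 = x₀)
    (hy : ∀ t, y (t + 1) = x t - γ t • g t)
    (hys : ∀ t, ys (t + 1) = x t - (s * γ t) • g t)
    (hx : ∀ t, x (t + 1) = y (t + 1) + β • (ys (t + 1) - ys t)) (n : ℕ) :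
    ‖x (n + 1) - x n + (s * γ n) • g n‖ ≤
      |(1 - β) * s - 1| * ∑ i ∈ range (n + 1), β ^ i * (γ (n - i) * ‖g (n - i)‖) := by
  rw [sum_method_momentum_eq hx0 hys0 hy hys hx, mul_sum]
  refine (norm_sum_le _ _).trans_eq (sum_congr rfl fun i _ => ?_)
  rw [norm_smul, norm_smul, norm_mul, norm_pow, Real.norm_of_nonneg hβ0,
    Real.norm_of_nonneg (hγ _), Real.norm_eq_abs]
  ring

theorem sq_norm_sub_add_le_of_holder {E F : Type*} [SeminormedAddCommGroup E]
    [SeminormedAddCommGroup F] {G : E → F} {A α : ℝ}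
    (hG : ∀ u v, ‖G u - G v‖ ≤ A * ‖u - v‖ ^ α) (u w : E) :
    ‖G (u + w) - G u‖ ^ 2 ≤ A ^ 2 * ‖w‖ ^ (2 * α) := by
  have h := hG (u + w) u
  rw [add_sub_cancel_left] at h
  calc ‖G (u + w) - G u‖ ^ 2 ≤ (A * ‖w‖ ^ α) ^ 2 := pow_le_pow_left₀ (norm_nonneg _) h 2
    _ = A ^ 2 * ‖w‖ ^ (2 * α) := by
      rw [mul_pow, mul_comm 2 α, Real.rpow_mul (norm_nonneg _), Real.rpow_two]

theorem sum_method_gradient_deviation_bound_general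
    {d : ℕ}
    (fgrad : EuclideanSpace ℝ (Fin d) → EuclideanSpace ℝ (Fin d))
    (α A : ℝ) (hα0 : 0 < α) (hα1 : α ≤ 1)
    (hHolder : ∀ p q, ‖fgrad p - fgrad q‖ ≤ A * ‖p - q‖ ^ α)
    (β s : ℝ) (hβ0 : 0 < β) (hβ1 : β < 1)
    (γ : ℕ → ℝ) (hγ : ∀ t, 0 ≤ γ t)
    (g : ℕ → EuclideanSpace ℝ (Fin d))
    (x₀ : EuclideanSpace ℝ (Fin d))
    (x y ys : ℕ → EuclideanSpace ℝ (Fin d))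
    (hx0 : x 0 = x₀) (hys0 : ys 0 = x₀)
    (hy : ∀ t, y (t + 1) = x t - γ t • g t)
    (hys : ∀ t, ys (t + 1) = x t - (s * γ t) • g t)
    (hx : ∀ t, x (t + 1) = y (t + 1) + β • (ys (t + 1) - ys t))
    (p z : ℕ → EuclideanSpace ℝ (Fin d))
    (hp : ∀ t, p (t + 1) = (β / (1 - β)) • (x (t + 1) - x t + (s * γ t) • g t))
    (hz : ∀ t, z t = x t + p t) :
    ∀ t : ℕ, 1 ≤ t →
      ‖fgrad (z t) - fgrad (x t)‖ ^ 2 ≤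
        A ^ 2 * β ^ (2 * α) * |(1 - β) * s - 1| ^ (2 * α) / (1 - β) ^ (3 * α) *
          ∑ i ∈ Finset.range t,
            β ^ ((i : ℝ) * α) * (γ (t - 1 - i) ^ (2 * α) * ‖g (t - 1 - i)‖ ^ (2 * α)) := by
  intro t ht
  obtain ⟨n, rfl⟩ : ∃ n, t = n + 1 := ⟨t - 1, by omega⟩
  simp only [show ∀ i, n + 1 - 1 - i = n - i from fun i => by omega]
  set c := (1 - β) * s - 1
  have hB : 0 < 1 - β := sub_pos.2 hβ1
  have hp_le : ‖p (n + 1)‖ ≤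
      β / (1 - β) * |c| * ∑ i ∈ range (n + 1), β ^ i * (γ (n - i) * ‖g (n - i)‖) := by
    rw [hp, norm_smul, Real.norm_of_nonneg (by positivity), mul_assoc]
    gcongr
    exact sum_method_norm_momentum_le hβ0.le hγ hx0 hys0 hy hys hx n
  have hconst : ∀ X : ℝ, (β / (1 - β) * |c|) ^ (2 * α) * (X / (1 - β) ^ α) =
      β ^ (2 * α) * |c| ^ (2 * α) / (1 - β) ^ (3 * α) * X := by
    intro X
    rw [Real.mul_rpow (by positivity) (abs_nonneg c), Real.div_rpow hβ0.le hB.le,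
      show 3 * α = 2 * α + α by ring, Real.rpow_add hB]
    field_simp
  rw [hz]
  calc _ ≤ A ^ 2 * ‖p (n + 1)‖ ^ (2 * α) := sq_norm_sub_add_le_of_holder hHolder _ _
    _ ≤ A ^ 2 * ((β / (1 - β) * |c|) ^ (2 * α) *
          (∑ i ∈ range (n + 1), β ^ i * (γ (n - i) * ‖g (n - i)‖)) ^ (2 * α)) := by
        gcongr
        rw [← Real.mul_rpow (by positivity) (sum_nonneg fun i _ =>
          mul_nonneg (pow_nonneg hβ0.le i) (mul_nonneg (hγ _) (norm_nonneg _)))]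
        exact Real.rpow_le_rpow (norm_nonneg _) hp_le (by positivity)
    _ ≤ A ^ 2 * ((β / (1 - β) * |c|) ^ (2 * α) *
          ((∑ i ∈ range (n + 1), β ^ ((i : ℝ) * α) * (γ (n - i) * ‖g (n - i)‖) ^ (2 * α)) /
            (1 - β) ^ α)) := by
        gcongr
        exact sum_pow_mul_rpow_two_mul_le hβ0.le hβ1
          (fun i => mul_nonneg (hγ (n - i)) (norm_nonneg _)) hα0 hα1 _
    _ = _ := by
        simp only [Real.mul_rpow (hγ _) (norm_nonneg _), hconst]
        ring

/-- **The momentum-deviation bound (10).** For the SUM iteration,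
`‖∇f(z_t) - ∇f(x_t)‖² ≤ (A²β^{2α}|(1-β)s-1|^{2α}/(1-β)^{3α})
  ∑_{i=0}^{t-1} β^{iα} γ_{t-1-i}^{2α} ‖g_{t-1-i}‖^{2α}` for all `t ≥ 1`. -/
theorem sum_method_gradient_deviation_bound
    {d : ℕ}
    (f : EuclideanSpace ℝ (Fin d) → ℝ)
    (fgrad : EuclideanSpace ℝ (Fin d) → EuclideanSpace ℝ (Fin d))
    (hdiff : ∀ p, HasGradientAt f (fgrad p) p)
    (α A : ℝ) (hα0 : 0 < α) (hα1 : α ≤ 1) (hA : 0 < A)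
    (hHolder : ∀ p q, ‖fgrad p - fgrad q‖ ≤ A * ‖p - q‖ ^ α)
    (β s : ℝ) (hβ0 : 0 < β) (hβ1 : β < 1) (hs : 0 ≤ s)
    (γ : ℕ → ℝ) (hγ : ∀ t, 0 ≤ γ t)
    (g : ℕ → EuclideanSpace ℝ (Fin d))
    (x₀ : EuclideanSpace ℝ (Fin d))
    (x y ys : ℕ → EuclideanSpace ℝ (Fin d))
    (hx0 : x 0 = x₀) (hys0 : ys 0 = x₀)
    (hy : ∀ t, y (t + 1) = x t - γ t • g t)
    (hys : ∀ t, ys (t + 1) = x t - (s * γ t) • g t)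
    (hx : ∀ t, x (t + 1) = y (t + 1) + β • (ys (t + 1) - ys t))
    (p z : ℕ → EuclideanSpace ℝ (Fin d))
    (hp0 : p 0 = 0)
    (hp : ∀ t, p (t + 1) = (β / (1 - β)) • (x (t + 1) - x t + (s * γ t) • g t))
    (hz : ∀ t, z t = x t + p t) :
    ∀ t : ℕ, 1 ≤ t →
      ‖fgrad (z t) - fgrad (x t)‖ ^ 2 ≤
        A ^ 2 * β ^ (2 * α) * |(1 - β) * s - 1| ^ (2 * α) / (1 - β) ^ (3 * α) *
          ∑ i ∈ Finset.range t,
            β ^ ((i : ℝ) * α) * (γ (t - 1 - i) ^ (2 * α) * ‖g (t - 1 - i)‖ ^ (2 * α)) :=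
  sum_method_gradient_deviation_bound_general fgrad α A hα0 hα1 hHolder β s hβ0 hβ1 γ hγ g x₀ x y ys
    hx0 hys0 hy hys hx p z hp hz
end

section
/- Let α ∈ (0,1], β ∈ (0,1), and let (γ_t)_{t≥0} be a nonnegative sequence with S = 1 + Σ_{t=0}^∞ γ_t^{1+α} < ∞. Then for nonnegative reals c_t, Σ_{t=0}^∞ Σ_{i=0}^{t−1} β^{iα} γ_t^{1−α} (γ_{t−1−i}^{1+α} c_{t−1−i})^{2α/(1+α)} ≤ (1/(1−β^α)) (1 + Σ_t γ_t^{1+α}) (1 + Σ_t γ_t^{1+α} c_t). -/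
open Filter Topology
open scoped ENNReal NNReal

/-- **Double-sum estimate (12).** For nonnegative stepsizes `γ` with
`∑ γ_t^{1+α} < ∞` and nonnegative reals `c_t`,
`∑_t ∑_{i<t} β^{iα} γ_t^{1-α} (γ_{t-1-i}^{1+α} c_{t-1-i})^{2α/(1+α)}
  ≤ (1/(1-β^α)) (1 + ∑ γ_t^{1+α}) (1 + ∑ γ_t^{1+α} c_t)`. -/
theorem momentum_double_sum_estimate
    (α β : ℝ) (hα0 : 0 < α) (hα1 : α ≤ 1) (hβ0 : 0 < β) (hβ1 : β < 1)
    (γ : ℕ → ℝ) (hγ : ∀ t, 0 ≤ γ t)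
    (c : ℕ → ℝ) (hc : ∀ t, 0 ≤ c t)
    (hconv : Summable fun t => γ t ^ (1 + α)) :
    ∑' t : ℕ, ∑ i ∈ Finset.range t,
        ENNReal.ofReal (β ^ ((i : ℝ) * α) * γ t ^ (1 - α) *
          (γ (t - 1 - i) ^ (1 + α) * c (t - 1 - i)) ^ (2 * α / (1 + α))) ≤
      ENNReal.ofReal (1 / (1 - β ^ α)) *
        ((1 + ∑' t : ℕ, ENNReal.ofReal (γ t ^ (1 + α))) *
          (1 + ∑' t : ℕ, ENNReal.ofReal (γ t ^ (1 + α) * c t))) := by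
  have h1α : (0:ℝ) < 1 + α := by linarith
  set r : ℝ := β ^ α with hrdef
  have hr0 : 0 ≤ r := Real.rpow_nonneg hβ0.le α
  have hr1 : r < 1 := Real.rpow_lt_one hβ0.le hβ1 hα0
  set F : ℕ → ℝ≥0∞ := fun i => ENNReal.ofReal (r ^ i) with hF
  set u : ℕ → ℝ≥0∞ := fun t => ENNReal.ofReal (γ t ^ (1 + α)) with hu
  set v : ℕ → ℝ≥0∞ := fun t => ENNReal.ofReal (γ t ^ (1 + α) * c t) with hv
  set G : ℝ≥0∞ := ENNReal.ofReal (1 / (1 - r)) with hG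
  -- the geometric series bound
  have hFsum : ∑' i, F i = G := by
    rw [hF, hG, ← ENNReal.ofReal_tsum_of_nonneg (fun i => pow_nonneg hr0 i)
      (summable_geometric_of_lt_one hr0 hr1), tsum_geometric_of_lt_one hr0 hr1, one_div]
  -- pointwise estimate via weighted AM-GM
  have key : ∀ t i : ℕ, ENNReal.ofReal (β ^ ((i : ℝ) * α) * γ t ^ (1 - α) *
        (γ (t - 1 - i) ^ (1 + α) * c (t - 1 - i)) ^ (2 * α / (1 + α)))
      ≤ F i * u t + F i * v (t - 1 - i) := by
    intro t i
    set X : ℝ := γ (t - 1 - i) ^ (1 + α) * c (t - 1 - i) with hX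
    have hX0 : 0 ≤ X := mul_nonneg (Real.rpow_nonneg (hγ _) _) (hc _)
    have hA0 : 0 ≤ γ t ^ (1 + α) := Real.rpow_nonneg (hγ t) _
    set w₁ : ℝ := (1 - α) / (1 + α) with hw₁def
    set w₂ : ℝ := 2 * α / (1 + α) with hw₂def
    have hw₁ : 0 ≤ w₁ := div_nonneg (by linarith) h1α.le
    have hw₂ : 0 ≤ w₂ := div_nonneg (by linarith) h1α.le
    have hw : w₁ + w₂ = 1 := by
      rw [hw₁def, hw₂def, ← add_div, div_eq_one_iff_eq (by linarith)]; ring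
    have hbi : β ^ ((i : ℝ) * α) = r ^ i := by
      rw [mul_comm, Real.rpow_mul hβ0.le, Real.rpow_natCast]
    have h1 : γ t ^ (1 - α) = (γ t ^ (1 + α)) ^ w₁ := by
      rw [← Real.rpow_mul (hγ t)]
      congr 1
      rw [hw₁def]
      field_simp
    have hgm : γ t ^ (1 - α) * X ^ w₂ ≤ γ t ^ (1 + α) + X := by
      rw [h1]
      refine (Real.geom_mean_le_arith_mean2_weighted hw₁ hw₂ hA0 hX0 hw).trans ?_
      have hw₁1 : w₁ ≤ 1 := by
        rw [hw₁def, div_le_one h1α]; linarith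
      have hw₂1 : w₂ ≤ 1 := by
        rw [hw₂def, div_le_one h1α]; linarith
      have := mul_le_mul_of_nonneg_right hw₁1 hA0
      have := mul_le_mul_of_nonneg_right hw₂1 hX0
      linarith
    have hP : β ^ ((i : ℝ) * α) * γ t ^ (1 - α) * X ^ w₂ ≤ r ^ i * (γ t ^ (1 + α) + X) := by
      rw [hbi, mul_assoc]
      exact mul_le_mul_of_nonneg_left hgm (pow_nonneg hr0 i)
    calc ENNReal.ofReal (β ^ ((i : ℝ) * α) * γ t ^ (1 - α) * X ^ w₂)
        ≤ ENNReal.ofReal (r ^ i * (γ t ^ (1 + α) + X)) := ENNReal.ofReal_le_ofReal hP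
      _ = F i * u t + F i * v (t - 1 - i) := by
          rw [mul_add, ENNReal.ofReal_add (mul_nonneg (pow_nonneg hr0 i) hA0)
            (mul_nonneg (pow_nonneg hr0 i) hX0),
            ENNReal.ofReal_mul (pow_nonneg hr0 i), ENNReal.ofReal_mul (pow_nonneg hr0 i)]
  -- first double sum
  have hAbound : ∑' t : ℕ, ∑ i ∈ Finset.range t, F i * u t ≤ G * ∑' t, u t := by
    rw [← ENNReal.tsum_mul_left]
    refine ENNReal.tsum_le_tsum fun t => ?_
    rw [← Finset.sum_mul]
    exact mul_le_mul_left ((ENNReal.sum_le_tsum _).trans hFsum.le) _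
  -- second double sum via reindexing
  have hBbound : ∑' t : ℕ, ∑ i ∈ Finset.range t, F i * v (t - 1 - i) = G * ∑' t, v t := by
    have hstep : ∀ t : ℕ, ∑ i ∈ Finset.range t, F i * v (t - 1 - i)
        = ∑' i : ℕ, (if i < t then F i * v (t - 1 - i) else 0) := by
      intro t
      have h := tsum_eq_sum (L := SummationFilter.unconditional ℕ) (s := Finset.range t)
        (f := fun i : ℕ => if i < t then F i * v (t - 1 - i) else 0)
        (fun i hi => if_neg (by simpa using hi))
      rw [h]
      exact Finset.sum_congr rfl fun i hi => (if_pos (Finset.mem_range.mp hi)).symm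
    simp_rw [hstep]
    have : (∑' t : ℕ, ∑' i : ℕ, (if i < t then F i * v (t - 1 - i) else 0))
        = ∑' p : ℕ × ℕ, (if p.2 < p.1 then F p.2 * v (p.1 - 1 - p.2) else 0) := by
      rw [ENNReal.tsum_prod']
    rw [this]
    have hinj : Function.Injective (fun q : ℕ × ℕ => ((q.1 + q.2 + 1, q.1) : ℕ × ℕ)) := by
      rintro ⟨a, b⟩ ⟨c, d⟩ h
      simp only [Prod.mk.injEq] at h
      refine Prod.ext ?_ ?_ <;> omega
    have hsupp : Function.support (fun p : ℕ × ℕ =>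
        (if p.2 < p.1 then F p.2 * v (p.1 - 1 - p.2) else 0))
        ⊆ Set.range (fun q : ℕ × ℕ => ((q.1 + q.2 + 1, q.1) : ℕ × ℕ)) := by
      rintro ⟨t, i⟩ hp
      simp only [Function.mem_support, ne_eq, ite_eq_right_iff, not_forall] at hp
      obtain ⟨hit, -⟩ := hp
      exact ⟨(i, t - 1 - i), by simp; omega⟩
    rw [← hinj.tsum_eq hsupp]
    have heval : ∀ q : ℕ × ℕ,
        (if (q.1 + q.2 + 1, q.1).2 < (q.1 + q.2 + 1, q.1).1 then
          F (q.1 + q.2 + 1, q.1).2 * v ((q.1 + q.2 + 1, q.1).1 - 1 - (q.1 + q.2 + 1, q.1).2)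
          else 0) = F q.1 * v q.2 := by
      rintro ⟨i, j⟩
      simp only
      rw [if_pos (by omega)]
      congr 1
      congr 1
      omega
    calc (∑' q : ℕ × ℕ, if (q.1 + q.2 + 1, q.1).2 < (q.1 + q.2 + 1, q.1).1 then
          F (q.1 + q.2 + 1, q.1).2 * v ((q.1 + q.2 + 1, q.1).1 - 1 - (q.1 + q.2 + 1, q.1).2)
          else 0)
        = ∑' q : ℕ × ℕ, F q.1 * v q.2 := tsum_congr heval
      _ = G * ∑' t, v t := by
          rw [ENNReal.tsum_prod']
          simp_rw [ENNReal.tsum_mul_left]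
          rw [ENNReal.tsum_mul_right, hFsum]
  -- put everything together
  calc ∑' t : ℕ, ∑ i ∈ Finset.range t,
        ENNReal.ofReal (β ^ ((i : ℝ) * α) * γ t ^ (1 - α) *
          (γ (t - 1 - i) ^ (1 + α) * c (t - 1 - i)) ^ (2 * α / (1 + α)))
      ≤ ∑' t : ℕ, ∑ i ∈ Finset.range t, (F i * u t + F i * v (t - 1 - i)) :=
        ENNReal.tsum_le_tsum fun t => Finset.sum_le_sum fun i _ => key t i
    _ = (∑' t : ℕ, ∑ i ∈ Finset.range t, F i * u t)
        + ∑' t : ℕ, ∑ i ∈ Finset.range t, F i * v (t - 1 - i) := by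
        simp_rw [Finset.sum_add_distrib]
        exact ENNReal.tsum_add
    _ ≤ G * (∑' t, u t) + G * (∑' t, v t) := add_le_add hAbound hBbound.le
    _ = G * ((∑' t, u t) + ∑' t, v t) := (mul_add _ _ _).symm
    _ ≤ G * ((1 + ∑' t, u t) * (1 + ∑' t, v t)) := by
        refine mul_le_mul_right ?_ G
        have h : (1 + ∑' t, u t) * (1 + ∑' t, v t)
            = ((∑' t, u t) + ∑' t, v t) + (1 + (∑' t, u t) * ∑' t, v t) := by ring
        rw [h]
        exact le_self_add
end

section
/- Let α ∈ (0,1], β ∈ (0,1), and let (γ_t)_{t≥0} be a nonnegative sequence with Σ_t γ_t^{1+α} < ∞. Then Σ_{t=0}^∞ Σ_{i=0}^{t−1} β^{iα} γ_t^{1−α} γ_{t−1−i}^{2α} ≤ (1/(1−β^α)) Σ_{t=0}^∞ γ_t^{1+α} ≤ S/(1−β^α), where S = 1 + Σ_{t=0}^∞ γ_t^{1+α}. -/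
/-! Weighted AM–GM with weights `(1-α)/(1+α)` and `2α/(1+α)` bounds each term by `β^{iα}` times
a convex combination of `γ_t^{1+α}` and `γ_{t-1-i}^{1+α}`. Summed over `i < t`, the first part is
at most, and the second (a Cauchy product) equal to, `(∑ β^{iα}) (∑ γ_t^{1+α})`. -/

open Finset
open scoped ENNReal

theorem Real.rpow_mul_rpow_le_add {x y p q r : ℝ} (hx : 0 ≤ x) (hy : 0 ≤ y) (hp : 0 ≤ p)
    (hq : 0 ≤ q) (hr : 0 < r) (hpq : p + q = r) :
    x ^ p * y ^ q ≤ p / r * x ^ r + q / r * y ^ r := by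
  have hamgm := Real.geom_mean_le_arith_mean2_weighted (div_nonneg hp hr.le)
    (div_nonneg hq hr.le) (Real.rpow_nonneg hx r) (Real.rpow_nonneg hy r)
    (by rw [← add_div, hpq, div_self hr.ne'])
  rwa [← Real.rpow_mul hx, ← Real.rpow_mul hy, mul_div_cancel₀ _ hr.ne',
    mul_div_cancel₀ _ hr.ne'] at hamgm

namespace ENNReal

theorem tsum_mul_tsum_eq_tsum_sum_antidiagonal {A : Type*} [AddCommMonoid A] [HasAntidiagonal A]
    (f g : A → ℝ≥0∞) :
    (∑' n, f n) * ∑' n, g n = ∑' n, ∑ kl ∈ antidiagonal n, f kl.1 * g kl.2 := by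
  rw [← ENNReal.tsum_mul_right]
  simp_rw [← ENNReal.tsum_mul_left]
  rw [← ENNReal.tsum_prod,
    ← HasAntidiagonal.sigmaAntidiagonalEquivProd.tsum_eq (fun kl : A × A => f kl.1 * g kl.2),
    ENNReal.tsum_sigma']
  exact tsum_congr fun n => Finset.tsum_subtype (antidiagonal n) fun kl => f kl.1 * g kl.2

theorem tsum_sum_range_mul_sub_one_sub (f g : ℕ → ℝ≥0∞) :
    ∑' t, ∑ i ∈ range t, f i * g (t - 1 - i) = (∑' i, f i) * ∑' j, g j := by
  rw [tsum_eq_zero_add' ENNReal.summable, tsum_mul_tsum_eq_tsum_sum_antidiagonal]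
  simp [Finset.Nat.sum_antidiagonal_eq_sum_range_succ (fun k l => f k * g l)]

theorem tsum_sum_range_mul_le (f g : ℕ → ℝ≥0∞) :
    ∑' t, ∑ i ∈ range t, f i * g t ≤ (∑' i, f i) * ∑' t, g t := by
  rw [← ENNReal.tsum_mul_left]
  refine ENNReal.tsum_le_tsum fun t => ?_
  rw [← Finset.sum_mul]
  gcongr
  exact ENNReal.sum_le_tsum _

theorem tsum_sum_range_mul_add_mul_le (f g : ℕ → ℝ≥0∞) {u v : ℝ≥0∞} (huv : u + v ≤ 1) :
    ∑' t, ∑ i ∈ range t, f i * (u * g t + v * g (t - 1 - i)) ≤ (∑' i, f i) * ∑' t, g t := by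
  calc ∑' t, ∑ i ∈ range t, f i * (u * g t + v * g (t - 1 - i))
      = u * ∑' t, ∑ i ∈ range t, f i * g t + v * ∑' t, ∑ i ∈ range t, f i * g (t - 1 - i) := by
        simp only [mul_add, Finset.sum_add_distrib, mul_left_comm (f _), ← Finset.mul_sum,
          ENNReal.tsum_add, ENNReal.tsum_mul_left]
    _ ≤ u * ((∑' i, f i) * ∑' t, g t) + v * ((∑' i, f i) * ∑' t, g t) := by
        rw [tsum_sum_range_mul_sub_one_sub]
        gcongr
        exact tsum_sum_range_mul_le f g
    _ ≤ (∑' i, f i) * ∑' t, g t := by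
        rw [← add_mul]
        exact mul_le_of_le_one_left' huv

end ENNReal

theorem ofReal_momentum_term_le {α β x y : ℝ} (hα0 : 0 ≤ α) (hα1 : α ≤ 1) (hβ : 0 ≤ β)
    (hx : 0 ≤ x) (hy : 0 ≤ y) (i : ℕ) :
    ENNReal.ofReal (β ^ ((i : ℝ) * α) * x ^ (1 - α) * y ^ (2 * α)) ≤
      ENNReal.ofReal ((β ^ α) ^ i) *
        (ENNReal.ofReal ((1 - α) / (1 + α)) * ENNReal.ofReal (x ^ (1 + α)) +
          ENNReal.ofReal (2 * α / (1 + α)) * ENNReal.ofReal (y ^ (1 + α))) := by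
  have hr : 0 < 1 + α := by linarith
  have hw₁ : 0 ≤ (1 - α) / (1 + α) := div_nonneg (by linarith) hr.le
  have hw₂ : 0 ≤ 2 * α / (1 + α) := by positivity
  have hyoung := Real.rpow_mul_rpow_le_add hx hy (by linarith : 0 ≤ 1 - α)
    (by positivity : 0 ≤ 2 * α) hr (by ring)
  rw [← ENNReal.ofReal_mul hw₁, ← ENNReal.ofReal_mul hw₂,
    ← ENNReal.ofReal_add (by positivity) (by positivity),
    ← ENNReal.ofReal_mul (by positivity)]
  refine ENNReal.ofReal_le_ofReal ?_
  rw [mul_comm (i : ℝ), Real.rpow_mul hβ, Real.rpow_natCast, mul_assoc]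
  gcongr

/-- **Double-sum estimate (13).** For nonnegative stepsizes `γ` with
`∑ γ_t^{1+α} < ∞`,
`∑_t ∑_{i<t} β^{iα} γ_t^{1-α} γ_{t-1-i}^{2α} ≤ (1/(1-β^α)) ∑ γ_t^{1+α} ≤ S/(1-β^α)`
where `S = 1 + ∑ γ_t^{1+α}`. -/
theorem momentum_double_sum_estimate'
    (α β : ℝ) (hα0 : 0 < α) (hα1 : α ≤ 1) (hβ0 : 0 < β) (hβ1 : β < 1)
    (γ : ℕ → ℝ) (hγ : ∀ t, 0 ≤ γ t)
    (hconv : Summable fun t => γ t ^ (1 + α)) :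
    (∑' t : ℕ, ∑ i ∈ Finset.range t,
        ENNReal.ofReal (β ^ ((i : ℝ) * α) * γ t ^ (1 - α) * γ (t - 1 - i) ^ (2 * α)) ≤
      ENNReal.ofReal (1 / (1 - β ^ α)) * ∑' t : ℕ, ENNReal.ofReal (γ t ^ (1 + α))) ∧
    ENNReal.ofReal (1 / (1 - β ^ α)) * ∑' t : ℕ, ENNReal.ofReal (γ t ^ (1 + α)) ≤
      ENNReal.ofReal ((1 + ∑' t : ℕ, γ t ^ (1 + α)) / (1 - β ^ α)) := by
  have hc0 : 0 ≤ β ^ α := Real.rpow_nonneg hβ0.le α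
  have hc1 : β ^ α < 1 := Real.rpow_lt_one hβ0.le hβ1 hα0
  have hgeom : ∑' i : ℕ, ENNReal.ofReal ((β ^ α) ^ i) = ENNReal.ofReal (1 / (1 - β ^ α)) := by
    rw [← ENNReal.ofReal_tsum_of_nonneg (fun i => pow_nonneg hc0 i)
      (summable_geometric_of_lt_one hc0 hc1), tsum_geometric_of_lt_one hc0 hc1, one_div]
  have hweights : ENNReal.ofReal ((1 - α) / (1 + α)) + ENNReal.ofReal (2 * α / (1 + α)) ≤ 1 := by
    rw [← ENNReal.ofReal_add (div_nonneg (by linarith) (by linarith)) (by positivity),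
      ← add_div, ENNReal.ofReal_le_one, div_le_one (by linarith)]
    linarith
  refine ⟨?_, ?_⟩
  · rw [← hgeom]
    refine le_trans (ENNReal.tsum_le_tsum fun t => Finset.sum_le_sum fun i _ => ?_)
      (ENNReal.tsum_sum_range_mul_add_mul_le _ _ hweights)
    exact ofReal_momentum_term_le hα0.le hα1 hβ0.le (hγ t) (hγ _) i
  · rw [← ENNReal.ofReal_tsum_of_nonneg (fun t => Real.rpow_nonneg (hγ t) _) hconv,
      ← ENNReal.ofReal_mul (by simp [hc1.le]), one_div_mul_eq_div]
    exact ENNReal.ofReal_le_ofReal (by gcongr; linarith)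
end

section
/- In the SUM method with β ∈ (0,1), define p_t and z_t as usual and δ_t = g_t − ∇f(x_t). If ∇f is α-Hölder continuous with constant A, then for any index t_k: ‖∇f(x_{t_k+1})‖ − ‖∇f(x_{t_k})‖ ≤ (A γ_{t_k}^α/(1−β)^α)‖∇f(x_{t_k})‖^α + (A/(1−β)^α)‖γ_{t_k} δ_{t_k}‖^α + A‖p_{t_k+1}‖^α + A‖p_{t_k}‖^α. -/
open Filter Topology

lemma sum_method_rpow_add_le (a b q : ℝ) (ha : 0 ≤ a) (hb : 0 ≤ b)
    (hq : 0 ≤ q) (hq1 : q ≤ 1) : (a + b) ^ q ≤ a ^ q + b ^ q := by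
  lift a to NNReal using ha
  lift b to NNReal using hb
  have := NNReal.rpow_add_le_add_rpow a b hq hq1
  exact_mod_cast this

/-- **Estimate (26).** Along the SUM iteration,
`‖∇f(x_{t+1})‖ - ‖∇f(x_t)‖ ≤ (Aγ_t^α/(1-β)^α)‖∇f(x_t)‖^α + (A/(1-β)^α)‖γ_t δ_t‖^α
  + A‖p_{t+1}‖^α + A‖p_t‖^α`. -/
theorem sum_method_gradient_increment_bound
    {d : ℕ}
    (f : EuclideanSpace ℝ (Fin d) → ℝ)
    (fgrad : EuclideanSpace ℝ (Fin d) → EuclideanSpace ℝ (Fin d))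
    (hdiff : ∀ p, HasGradientAt f (fgrad p) p)
    (α A : ℝ) (hα0 : 0 < α) (hα1 : α ≤ 1) (hA : 0 < A)
    (hHolder : ∀ p q, ‖fgrad p - fgrad q‖ ≤ A * ‖p - q‖ ^ α)
    (β s : ℝ) (hβ0 : 0 < β) (hβ1 : β < 1) (hs : 0 ≤ s)
    (γ : ℕ → ℝ) (hγ : ∀ t, 0 ≤ γ t)
    (g : ℕ → EuclideanSpace ℝ (Fin d))
    (x₀ : EuclideanSpace ℝ (Fin d))
    (x y ys : ℕ → EuclideanSpace ℝ (Fin d))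
    (hx0 : x 0 = x₀) (hys0 : ys 0 = x₀)
    (hy : ∀ t, y (t + 1) = x t - γ t • g t)
    (hys : ∀ t, ys (t + 1) = x t - (s * γ t) • g t)
    (hx : ∀ t, x (t + 1) = y (t + 1) + β • (ys (t + 1) - ys t))
    (p z : ℕ → EuclideanSpace ℝ (Fin d))
    (hp0 : p 0 = 0)
    (hp : ∀ t, p (t + 1) = (β / (1 - β)) • (x (t + 1) - x t + (s * γ t) • g t))
    (hz : ∀ t, z t = x t + p t)
    (δ : ℕ → EuclideanSpace ℝ (Fin d))
    (hδ : ∀ t, δ t = g t - fgrad (x t)) :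
    ∀ t : ℕ,
      ‖fgrad (x (t + 1))‖ - ‖fgrad (x t)‖ ≤
        A * γ t ^ α / (1 - β) ^ α * ‖fgrad (x t)‖ ^ α
        + A / (1 - β) ^ α * ‖γ t • δ t‖ ^ α
        + A * ‖p (t + 1)‖ ^ α + A * ‖p t‖ ^ α := by
  have hβ' : (0:ℝ) < 1 - β := by linarith
  have hβne : (1 - β) ≠ 0 := ne_of_gt hβ'
  have hβne' : β ≠ 0 := ne_of_gt hβ0
  -- key structural fact: x t - ys t = ((1-β)/β) • p t
  have hxys : ∀ t, x t - ys t = ((1 - β) / β) • p t := by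
    intro t
    cases t with
    | zero => simp [hx0, hys0, hp0]
    | succ n =>
        rw [hys n, hp n]
        rw [smul_smul]
        rw [div_mul_div_comm]
        rw [mul_comm (1-β) β, div_self (by positivity : β * (1-β) ≠ 0), one_smul]
        abel
  -- z step
  have hzstep : ∀ t, z (t + 1) = z t - (γ t / (1 - β)) • g t := by
    intro t
    have hyst : ys t = x t - ((1 - β) / β) • p t := by
      rw [← hxys t]; abel
    have hx' : x (t + 1) = x t + (-(1 + β * s) * γ t) • g t + (1 - β) • p t := by
      rw [hx t, hy t, hys t, hyst]
      match_scalars <;> field_simp <;> ring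
    rw [hz (t+1), hz t, hp t, hx']
    match_scalars <;> field_simp <;> ring
  intro t
  set u := fgrad (x (t + 1))
  set v := fgrad (x t)
  have htri : ‖u‖ - ‖v‖ ≤ ‖u - fgrad (z (t+1))‖ + ‖fgrad (z (t+1)) - fgrad (z t)‖
      + ‖fgrad (z t) - v‖ := by
    have h1 : ‖u‖ - ‖v‖ ≤ ‖u - v‖ := norm_sub_norm_le u v
    have h2 : u - v = (u - fgrad (z (t+1))) + (fgrad (z (t+1)) - fgrad (z t))
        + (fgrad (z t) - v) := by abel
    calc ‖u‖ - ‖v‖ ≤ ‖u - v‖ := h1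
      _ ≤ _ := by rw [h2]; exact norm_add₃_le
  have hxz : ∀ r, x r - z r = -(p r) := by intro r; rw [hz r]; abel
  have hb1 : ‖u - fgrad (z (t+1))‖ ≤ A * ‖p (t+1)‖ ^ α := by
    have := hHolder (x (t+1)) (z (t+1))
    rwa [hxz (t+1), norm_neg] at this
  have hb3 : ‖fgrad (z t) - v‖ ≤ A * ‖p t‖ ^ α := by
    have := hHolder (z t) (x t)
    have hzx : z t - x t = p t := by rw [hz t]; abel
    rwa [hzx] at this
  have hzz : ‖z (t+1) - z t‖ = γ t / (1 - β) * ‖g t‖ := by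
    rw [hzstep t]
    have : z t - (γ t / (1 - β)) • g t - z t = -((γ t / (1 - β)) • g t) := by abel
    rw [this, norm_neg, norm_smul, Real.norm_eq_abs,
      abs_of_nonneg (div_nonneg (hγ t) (le_of_lt hβ'))]
  have hgnorm : ‖g t‖ ≤ ‖v‖ + ‖δ t‖ := by
    have : g t = v + δ t := by rw [hδ t]; abel
    rw [this]; exact norm_add_le _ _
  have hb2 : ‖fgrad (z (t+1)) - fgrad (z t)‖ ≤
      A * γ t ^ α / (1 - β) ^ α * ‖v‖ ^ α + A / (1 - β) ^ α * ‖γ t • δ t‖ ^ α := by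
    have h0 := hHolder (z (t+1)) (z t)
    have hγβ : 0 ≤ γ t / (1 - β) := div_nonneg (hγ t) (le_of_lt hβ')
    have hstep1 : ‖z (t+1) - z t‖ ^ α ≤ (γ t / (1 - β)) ^ α * (‖v‖ + ‖δ t‖) ^ α := by
      rw [hzz, ← Real.mul_rpow hγβ (by positivity)]
      exact Real.rpow_le_rpow (mul_nonneg (div_nonneg (hγ t) (le_of_lt hβ')) (norm_nonneg _))
        (mul_le_mul_of_nonneg_left hgnorm hγβ) (le_of_lt hα0)
    have hstep2 : (‖v‖ + ‖δ t‖) ^ α ≤ ‖v‖ ^ α + ‖δ t‖ ^ α :=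
      sum_method_rpow_add_le _ _ _ (norm_nonneg _) (norm_nonneg _) (le_of_lt hα0) hα1
    have hδs : ‖γ t • δ t‖ ^ α = γ t ^ α * ‖δ t‖ ^ α := by
      rw [norm_smul, Real.norm_eq_abs, abs_of_nonneg (hγ t),
        Real.mul_rpow (hγ t) (norm_nonneg _)]
    have hdivpow : (γ t / (1 - β)) ^ α = γ t ^ α / (1 - β) ^ α :=
      Real.div_rpow (hγ t) (le_of_lt hβ') α
    calc ‖fgrad (z (t+1)) - fgrad (z t)‖ ≤ A * ‖z (t+1) - z t‖ ^ α := h0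
      _ ≤ A * ((γ t / (1 - β)) ^ α * (‖v‖ + ‖δ t‖) ^ α) := by
          exact mul_le_mul_of_nonneg_left hstep1 (le_of_lt hA)
      _ ≤ A * ((γ t / (1 - β)) ^ α * (‖v‖ ^ α + ‖δ t‖ ^ α)) := by
          have : (0:ℝ) ≤ (γ t / (1 - β)) ^ α := Real.rpow_nonneg hγβ α
          exact mul_le_mul_of_nonneg_left
            (mul_le_mul_of_nonneg_left hstep2 this) (le_of_lt hA)
      _ = A * γ t ^ α / (1 - β) ^ α * ‖v‖ ^ α + A / (1 - β) ^ α * ‖γ t • δ t‖ ^ α := by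
          rw [hδs, hdivpow]; ring
  linarith
end
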